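/- arXiv:2104.08743 — 2 statements merged into one kernel-verified Lean document; each statement's English description precedes it below -/
import Mathlib

section
/- Let G be a finite simple graph with vertex set V whose automorphism group has exactly n orbits on V. If A_1, A_2 ⊆ V are attribute subsets such that for each i ∈ {1,2} the number of orbits having nonempty intersection with A_i is n or n−1, then γ_{A_1}(G) = γ_{A_2}(G), i.e., the relations ≡_{A_1} and ≡_{A_2} coincide. -/
/-- The orbit of a vertex `x` under the automorphism group of the graph `G`:
`O(x) = {φ(x) : φ an automorphism of G}`. -/
def orb {V : Type*} (G : SimpleGraph V) (x : V) : Set V :=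
  {y | ∃ φ : G ≃g G, φ x = y}

/-- The indiscernibility relation `x ≡_A y` iff `O(x) ∩ A = O(y) ∩ A`. -/
def Indis {V : Type*} (G : SimpleGraph V) (A : Set V) (x y : V) : Prop :=
  orb G x ∩ A = orb G y ∩ A

/-- The `≡_A`-equivalence class `O_A(x)` of a vertex `x`. -/
def eqCls {V : Type*} (G : SimpleGraph V) (A : Set V) (x : V) : Set V :=
  {y | Indis G A x y}

/-- `O(A) = ⋃_{a ∈ A} O(a)`. -/
def orbSet {V : Type*} (G : SimpleGraph V) (A : Set V) : Set V :=
  ⋃ a ∈ A, orb G a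

/-- Lower approximation `L_A(Q) = {x | O_A(x) ⊆ Q}`. -/
def lowerApprox {V : Type*} (G : SimpleGraph V) (A Q : Set V) : Set V :=
  {x | eqCls G A x ⊆ Q}

/-- Upper approximation `U_A(Q) = {x | O_A(x) ∩ Q ≠ ∅}`. -/
def upperApprox {V : Type*} (G : SimpleGraph V) (A Q : Set V) : Set V :=
  {x | (eqCls G A x ∩ Q).Nonempty}

/-- The set of orbits of the automorphism group of `G` on the vertex set. -/
def orbitsOf {V : Type*} (G : SimpleGraph V) : Set (Set V) :=
  {s | ∃ x : V, s = orb G x}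

lemma orb_eq_of_mem {V : Type*} {G : SimpleGraph V} {x z : V} (h : z ∈ orb G x) :
    orb G z = orb G x := by
  obtain ⟨φ, hφ⟩ := h
  ext w
  constructor
  · rintro ⟨ψ, hψ⟩
    exact ⟨φ.trans ψ, by simp [hφ, hψ]⟩
  · rintro ⟨σ, hσ⟩
    refine ⟨φ.symm.trans σ, ?_⟩
    have : φ.symm z = x := by rw [← hφ]; simp
    simp [this, hσ]

lemma orb_eq_of_inter {V : Type*} {G : SimpleGraph V} {x y z : V}
    (hx : z ∈ orb G x) (hy : z ∈ orb G y) : orb G x = orb G y := by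
  rw [← orb_eq_of_mem hx, ← orb_eq_of_mem hy]

lemma indis_iff_orb_eq {V : Type*} [Fintype V] (G : SimpleGraph V) (n : ℕ)
    (hn : (orbitsOf G).ncard = n) (A : Set V)
    (h : {s ∈ orbitsOf G | (s ∩ A).Nonempty}.ncard = n ∨
         {s ∈ orbitsOf G | (s ∩ A).Nonempty}.ncard = n - 1)
    (x y : V) : Indis G A x y ↔ orb G x = orb G y := by
  constructor
  · intro hI
    by_cases hne : (orb G x ∩ A).Nonempty
    · obtain ⟨z, hzx, hzA⟩ := hne
      have hzy : z ∈ orb G y ∩ A := by rw [← hI]; exact ⟨hzx, hzA⟩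
      exact orb_eq_of_inter hzx hzy.1
    · have hex : orb G x ∩ A = ∅ := Set.not_nonempty_iff_eq_empty.mp hne
      have hey : orb G y ∩ A = ∅ := by rw [← hI]; exact hex
      have hsub : {s ∈ orbitsOf G | (s ∩ A).Nonempty} ⊆ orbitsOf G := fun s hs => hs.1
      have hfin : (orbitsOf G).Finite := Set.toFinite _
      have hnpos : 1 ≤ n := by
        rw [← hn]
        exact (Set.ncard_pos hfin).mpr ⟨orb G x, ⟨x, rfl⟩⟩
      rcases h with h | h
      · -- A meets all orbits, contradicting hex
        have : {s ∈ orbitsOf G | (s ∩ A).Nonempty} = orbitsOf G :=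
          Set.eq_of_subset_of_ncard_le hsub (by rw [h, hn]) hfin
        have hx : orb G x ∈ orbitsOf G := ⟨x, rfl⟩
        rw [← this] at hx
        exact absurd hx.2 (by simp [hex])
      · have hd : (orbitsOf G \ {s ∈ orbitsOf G | (s ∩ A).Nonempty}).ncard = 1 := by
          rw [Set.ncard_diff hsub (hfin.subset hsub), h, hn]
          omega
        obtain ⟨t, ht⟩ := Set.ncard_eq_one.mp hd
        have hxd : orb G x ∈ orbitsOf G \ {s ∈ orbitsOf G | (s ∩ A).Nonempty} :=
          ⟨⟨x, rfl⟩, fun hc => by simp [hex] at hc⟩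
        have hyd : orb G y ∈ orbitsOf G \ {s ∈ orbitsOf G | (s ∩ A).Nonempty} :=
          ⟨⟨y, rfl⟩, fun hc => by simp [hey] at hc⟩
        rw [ht] at hxd hyd
        rw [Set.mem_singleton_iff] at hxd hyd
        rw [hxd, hyd]
  · intro h
    unfold Indis
    rw [h]

/-- if `G` has exactly `n` orbits and each of `A₁`, `A₂` has nonempty
intersection with `n` or `n - 1` of the orbits, then `γ_{A₁}(G) = γ_{A₂}(G)`. -/
theorem stmt_3 {V : Type*} [Fintype V] (G : SimpleGraph V) (n : ℕ)
    (hn : (orbitsOf G).ncard = n) (A₁ A₂ : Set V)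
    (h1 : {s ∈ orbitsOf G | (s ∩ A₁).Nonempty}.ncard = n ∨
          {s ∈ orbitsOf G | (s ∩ A₁).Nonempty}.ncard = n - 1)
    (h2 : {s ∈ orbitsOf G | (s ∩ A₂).Nonempty}.ncard = n ∨
          {s ∈ orbitsOf G | (s ∩ A₂).Nonempty}.ncard = n - 1) :
    ∀ x y : V, Indis G A₁ x y ↔ Indis G A₂ x y := by
  intro x y
  rw [indis_iff_orb_eq G n hn A₁ h1 x y, indis_iff_orb_eq G n hn A₂ h2 x y]
end

section
/- Let G = K_{m,n} be the complete bipartite graph with parts V₁ and V₂ of sizes m and n, where m ≠ n, and let V = V₁ ∪ V₂. Let A ⊆ V be a nonempty attribute subset and Q ⊆ V with Q ≠ V. Then the lower approximation satisfies: L_A(Q) = V₁ if V₁ ⊆ Q; L_A(Q) = V₂ if V₂ ⊆ Q; and L_A(Q) = ∅ if neither V₁ ⊆ Q nor V₂ ⊆ Q. -/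
/-- The complete bipartite graph `K_{m,n}` on `Fin m ⊕ Fin n`. -/
def Kmn (m n : ℕ) : SimpleGraph (Fin m ⊕ Fin n) :=
  completeBipartiteGraph (Fin m) (Fin n)

/-- The first part `V₁` of `K_{m,n}`. -/
def V1 (m n : ℕ) : Set (Fin m ⊕ Fin n) := Set.range Sum.inl

/-- The second part `V₂` of `K_{m,n}`. -/
def V2 (m n : ℕ) : Set (Fin m ⊕ Fin n) := Set.range Sum.inr

lemma nbhd_inl (m n : ℕ) (x : Fin m) :
    (Kmn m n).neighborSet (Sum.inl x) = Set.range Sum.inr := by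
  ext b; cases b <;> simp [Kmn, SimpleGraph.neighborSet]

lemma nbhd_inr (m n : ℕ) (y : Fin n) :
    (Kmn m n).neighborSet (Sum.inr y) = Set.range Sum.inl := by
  ext b; cases b <;> simp [Kmn, SimpleGraph.neighborSet]

lemma card_range_inl (m n : ℕ) : Nat.card (Set.range (Sum.inl : Fin m → Fin m ⊕ Fin n)) = m := by
  rw [Nat.card_range_of_injective Sum.inl_injective, Nat.card_eq_fintype_card, Fintype.card_fin]

lemma card_range_inr (m n : ℕ) : Nat.card (Set.range (Sum.inr : Fin n → Fin m ⊕ Fin n)) = n := by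
  rw [Nat.card_range_of_injective Sum.inr_injective, Nat.card_eq_fintype_card, Fintype.card_fin]

lemma phi_inl (m n : ℕ) (hmn : m ≠ n) (φ : Kmn m n ≃g Kmn m n) (x : Fin m) :
    ∃ x', φ (Sum.inl x) = Sum.inl x' := by
  rcases h : φ (Sum.inl x) with x' | y'
  · exact ⟨x', rfl⟩
  · exfalso
    have e := φ.mapNeighborSet (Sum.inl x)
    rw [h, nbhd_inl, nbhd_inr] at e
    have h1 := card_range_inl m n
    have h2 := card_range_inr m n
    have h3 := Nat.card_congr e
    omega

lemma phi_inr (m n : ℕ) (hmn : m ≠ n) (φ : Kmn m n ≃g Kmn m n) (y : Fin n) :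
    ∃ y', φ (Sum.inr y) = Sum.inr y' := by
  rcases h : φ (Sum.inr y) with x' | y'
  · exfalso
    have e := φ.mapNeighborSet (Sum.inr y)
    rw [h, nbhd_inr, nbhd_inl] at e
    have h1 := card_range_inl m n
    have h2 := card_range_inr m n
    have h3 := Nat.card_congr e
    omega
  · exact ⟨y', rfl⟩

def swapIso (m n : ℕ) (x x' : Fin m) : Kmn m n ≃g Kmn m n where
  toEquiv := Equiv.sumCongr (Equiv.swap x x') (Equiv.refl _)
  map_rel_iff' := by
    intro a b
    cases a <;> cases b <;> simp only [Kmn, Equiv.sumCongr_apply, Sum.map_inl, Sum.map_inr, completeBipartiteGraph, Equiv.refl_apply] <;> simp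

def swapIso' (m n : ℕ) (y y' : Fin n) : Kmn m n ≃g Kmn m n where
  toEquiv := Equiv.sumCongr (Equiv.refl _) (Equiv.swap y y')
  map_rel_iff' := by
    intro a b
    cases a <;> cases b <;> simp only [Kmn, Equiv.sumCongr_apply, Sum.map_inl, Sum.map_inr, completeBipartiteGraph, Equiv.refl_apply] <;> simp

lemma orb_inl (m n : ℕ) (hmn : m ≠ n) (x : Fin m) :
    orb (Kmn m n) (Sum.inl x) = V1 m n := by
  ext z
  constructor
  · rintro ⟨φ, rfl⟩
    obtain ⟨x', h⟩ := phi_inl m n hmn φ x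
    exact ⟨x', h.symm⟩
  · rintro ⟨x', rfl⟩
    exact ⟨swapIso m n x x', by simp [swapIso, Equiv.swap_apply_left]⟩

lemma orb_inr (m n : ℕ) (hmn : m ≠ n) (y : Fin n) :
    orb (Kmn m n) (Sum.inr y) = V2 m n := by
  ext z
  constructor
  · rintro ⟨φ, rfl⟩
    obtain ⟨y', h⟩ := phi_inr m n hmn φ y
    exact ⟨y', h.symm⟩
  · rintro ⟨y', rfl⟩
    exact ⟨swapIso' m n y y', by simp [swapIso', Equiv.swap_apply_left]⟩

lemma neA (m n : ℕ) (A : Set (Fin m ⊕ Fin n)) (hA : A.Nonempty) :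
    V1 m n ∩ A ≠ V2 m n ∩ A := by
  intro h
  obtain ⟨a, ha⟩ := hA
  cases a with
  | inl x =>
    have h1 : Sum.inl x ∈ V1 m n ∩ A := ⟨⟨x, rfl⟩, ha⟩
    rw [h] at h1
    obtain ⟨⟨y, hy⟩, -⟩ := h1
    exact absurd hy Sum.inr_ne_inl
  | inr y =>
    have h1 : Sum.inr y ∈ V2 m n ∩ A := ⟨⟨y, rfl⟩, ha⟩
    rw [← h] at h1
    obtain ⟨⟨x, hx⟩, -⟩ := h1
    exact absurd hx Sum.inl_ne_inr

lemma eqCls_inl (m n : ℕ) (hmn : m ≠ n) (A : Set (Fin m ⊕ Fin n)) (hA : A.Nonempty)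
    (x : Fin m) : eqCls (Kmn m n) A (Sum.inl x) = V1 m n := by
  ext z
  cases z with
  | inl x' =>
    simp only [eqCls, Indis, Set.mem_setOf_eq, orb_inl m n hmn]
    exact ⟨fun _ => ⟨x', rfl⟩, fun _ => trivial⟩
  | inr y' =>
    simp only [eqCls, Indis, Set.mem_setOf_eq, orb_inl m n hmn, orb_inr m n hmn]
    constructor
    · intro h; exact absurd h (neA m n A hA)
    · rintro ⟨x'', hx⟩; exact absurd hx Sum.inl_ne_inr

lemma eqCls_inr (m n : ℕ) (hmn : m ≠ n) (A : Set (Fin m ⊕ Fin n)) (hA : A.Nonempty)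
    (y : Fin n) : eqCls (Kmn m n) A (Sum.inr y) = V2 m n := by
  ext z
  cases z with
  | inl x' =>
    simp only [eqCls, Indis, Set.mem_setOf_eq, orb_inl m n hmn, orb_inr m n hmn]
    constructor
    · intro h; exact absurd h.symm (neA m n A hA)
    · rintro ⟨y'', hy⟩; exact absurd hy Sum.inr_ne_inl
  | inr y' =>
    simp only [eqCls, Indis, Set.mem_setOf_eq, orb_inr m n hmn]
    exact ⟨fun _ => ⟨y', rfl⟩, fun _ => trivial⟩


/-- in `K_{m,n}` with `m ≠ n`, for nonempty `A` and `Q ≠ V`: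
`L_A(Q) = V₁` if `V₁ ⊆ Q`; `L_A(Q) = V₂` if `V₂ ⊆ Q`; and `L_A(Q) = ∅` otherwise. -/
theorem stmt_11 (m n : ℕ) (hmn : m ≠ n) (A Q : Set (Fin m ⊕ Fin n))
    (hA : A.Nonempty) (hQ : Q ≠ Set.univ) :
    (V1 m n ⊆ Q → lowerApprox (Kmn m n) A Q = V1 m n) ∧
    (V2 m n ⊆ Q → lowerApprox (Kmn m n) A Q = V2 m n) ∧
    (¬ V1 m n ⊆ Q → ¬ V2 m n ⊆ Q → lowerApprox (Kmn m n) A Q = ∅) := by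
  have hmem : ∀ z : Fin m ⊕ Fin n, z ∈ lowerApprox (Kmn m n) A Q ↔
      (∃ x, z = Sum.inl x ∧ V1 m n ⊆ Q) ∨ (∃ y, z = Sum.inr y ∧ V2 m n ⊆ Q) := by
    intro z
    cases z with
    | inl x =>
      simp only [lowerApprox, Set.mem_setOf_eq, eqCls_inl m n hmn A hA]
      constructor
      · intro h; exact Or.inl ⟨x, rfl, h⟩
      · rintro (⟨x', h, hQ'⟩ | ⟨y', h, -⟩)
        · exact hQ'
        · exact absurd h Sum.inl_ne_inr
    | inr y =>
      simp only [lowerApprox, Set.mem_setOf_eq, eqCls_inr m n hmn A hA]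
      constructor
      · intro h; exact Or.inr ⟨y, rfl, h⟩
      · rintro (⟨x', h, -⟩ | ⟨y', h, hQ'⟩)
        · exact absurd h Sum.inr_ne_inl
        · exact hQ'
  have hnotboth : ¬ (V1 m n ⊆ Q ∧ V2 m n ⊆ Q) := by
    rintro ⟨h1, h2⟩
    apply hQ
    ext z
    simp only [Set.mem_univ, iff_true]
    cases z with
    | inl x => exact h1 ⟨x, rfl⟩
    | inr y => exact h2 ⟨y, rfl⟩
  refine ⟨fun h1 => ?_, fun h2 => ?_, fun h1 h2 => ?_⟩
  · have h2 : ¬ V2 m n ⊆ Q := fun h2 => hnotboth ⟨h1, h2⟩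
    ext z
    rw [hmem]
    constructor
    · rintro (⟨x, rfl, -⟩ | ⟨y, rfl, hc⟩)
      · exact ⟨x, rfl⟩
      · exact absurd hc h2
    · rintro ⟨x, rfl⟩; exact Or.inl ⟨x, rfl, h1⟩
  · have h1 : ¬ V1 m n ⊆ Q := fun h1 => hnotboth ⟨h1, h2⟩
    ext z
    rw [hmem]
    constructor
    · rintro (⟨x, rfl, hc⟩ | ⟨y, rfl, -⟩)
      · exact absurd hc h1
      · exact ⟨y, rfl⟩
    · rintro ⟨y, rfl⟩; exact Or.inr ⟨y, rfl, h2⟩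
  · ext z
    rw [hmem]
    simp only [Set.mem_empty_iff_false, iff_false]
    rintro (⟨x, rfl, hc⟩ | ⟨y, rfl, hc⟩)
    · exact h1 hc
    · exact h2 hc
end
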